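/- Let γ : [0,1] → ℝ² be C¹ at uniform ℓ¹-speed L > 0, δ_k the modulus of continuity of γ̇ at scale 1/k, and ε_k = √(δ_k/L) + √(1/k). Let E_{k-1} = {u ∈ Δ_{k-1} : |u_j - j/k| < ε_k for all j}. Then there exist a constant c > 0 and K such that for all k ≥ K and n = ⌈k² log k⌉: ∫_{Δ_{k-1} ∩ E_{k-1}} ∏_{j=1}^{k} |Δ_{u_j} γ|^n du ≥ (1 - e^{-cn}) ∫_{Δ_{k-1}} ∏_{j=1}^{k} |Δ_{u_j} γ|^n du. -/

import Mathlib

open Set MeasureTheory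

/-- The `i`-th partition point determined by `u ∈ ℝ^{k-1}`, with the
conventions `u₀ = 0` and `u_k = 1`. -/
def pt (k : ℕ) (u : Fin (k-1) → ℝ) (i : ℕ) : ℝ :=
  if _h0 : i = 0 then 0
  else if h : i ≤ k - 1 then u ⟨i - 1, by omega⟩ else 1

/-!
Write `f` for the integrand and `g_i = u_{i+1} - u_i` for the gaps, so that `∑ g_i = 1` and
`f ≤ (L^k ∏ g_i)^n` since chords are shorter than arcs. If `|u_j - j/k| ≥ ε`, AM-GM on the
gaps to the left and to the right of `u_j` followed by Pinsker's inequality gives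
`∏ g_i ≤ k^{-k} e^{-2kε²}`, so `f ≤ ((L/k)^k e^{-2kε²})^n` outside the `ε`-neighbourhood of the
uniform partition, a set of volume at most one. Conversely, on the cube of radius `1/(4k²)` about
the uniform partition every gap lies within `1/(2k²)` of `1/k`, and on such short intervals the
velocity moves by at most `δ_k`, so every chord is at least `(L - δ_k)(1/k - 1/(2k²))`; the cube
has volume `(2k²)^{1-k}`. Since `ε² ≥ δ_k/L + 1/k` and `n ≥ k² log k`, the first bound is at
most `e^{-n/2}` times the second once `δ_k ≤ L/2` and `k ≥ 6`, which gives `c = 1/2`.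
-/

namespace Real

lemma exp_neg_two_mul_le_one_sub {x : ℝ} (hx₀ : 0 ≤ x) (hx : x ≤ 1 / 2) :
    exp (-(2 * x)) ≤ 1 - x := by
  have hpos : 0 < 1 + 2 * x := by linarith
  calc exp (-(2 * x)) = (exp (2 * x))⁻¹ := exp_neg _
    _ ≤ (1 + 2 * x)⁻¹ := inv_anti₀ hpos (by linarith [add_one_le_exp (2 * x)])
    _ ≤ 1 - x := by
      rw [inv_le_iff_one_le_mul₀' hpos]
      nlinarith

lemma le_of_sub_mul_hasDerivAt_nonpos {f f' : ℝ → ℝ} {a b p t : ℝ} (hp : p ∈ Ioo a b)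
    (ht : t ∈ Ioo a b) (hf : ∀ s ∈ Ioo a b, HasDerivAt f (f' s) s)
    (hsign : ∀ s ∈ Ioo a b, (s - p) * f' s ≤ 0) : f t ≤ f p := by
  have hsub : ∀ {c d}, c ∈ Ioo a b → d ∈ Ioo a b → Icc c d ⊆ Ioo a b := fun hc hd =>
    Icc_subset_Ioo hc.1 hd.2
  have hcont : ∀ {c d}, c ∈ Ioo a b → d ∈ Ioo a b → ContinuousOn f (Icc c d) :=
    fun hc hd s hs => (hf s (hsub hc hd hs)).continuousAt.continuousWithinAt
  have hderiv : ∀ {c d}, c ∈ Ioo a b → d ∈ Ioo a b →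
      ∀ s ∈ interior (Icc c d), HasDerivWithinAt f (f' s) (interior (Icc c d)) s :=
    fun hc hd s hs => (hf s (hsub hc hd (interior_subset hs))).hasDerivWithinAt
  rcases le_total p t with hpt | htp
  · refine antitoneOn_of_hasDerivWithinAt_nonpos (convex_Icc p t) (hcont hp ht) (hderiv hp ht)
      (fun s hs => ?_) (left_mem_Icc.2 hpt) (right_mem_Icc.2 hpt) hpt
    rw [interior_Icc] at hs
    exact nonpos_of_mul_nonpos_right (hsign s (hsub hp ht (Ioo_subset_Icc_self hs)))
      (sub_pos.2 hs.1)
  · refine monotoneOn_of_hasDerivWithinAt_nonneg (convex_Icc t p) (hcont ht hp) (hderiv ht hp)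
      (fun s hs => ?_) (left_mem_Icc.2 htp) (right_mem_Icc.2 htp) htp
    rw [interior_Icc] at hs
    exact nonneg_of_mul_nonpos_right (hsign s (hsub ht hp (Ioo_subset_Icc_self hs)))
      (sub_neg.2 hs.2)

lemma bernoulli_pinsker {p t : ℝ} (hp : p ∈ Ioo (0 : ℝ) 1) (ht : t ∈ Ioo (0 : ℝ) 1) :
    p * log t + (1 - p) * log (1 - t) + 2 * (t - p) ^ 2 ≤
      p * log p + (1 - p) * log (1 - p) := by
  let ψ s := p * log s + (1 - p) * log (1 - s) + 2 * (s - p) ^ 2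
  have hψ : ∀ s ∈ Ioo (0 : ℝ) 1,
      HasDerivAt ψ (p / s - (1 - p) / (1 - s) + 4 * (s - p)) s := by
    intro s ⟨hs₀, hs₁⟩
    have hlog := ((hasDerivAt_id' s).const_sub 1).log (by simp; linarith)
    have := (((hasDerivAt_log hs₀.ne').const_mul p).add (hlog.const_mul (1 - p))).add
      (((hasDerivAt_id' s).sub_const p).pow 2 |>.const_mul 2)
    refine this.congr_deriv ?_
    field_simp
    ring
  have := le_of_sub_mul_hasDerivAt_nonpos hp ht hψ fun s ⟨hs₀, hs₁⟩ => by
    have h1s : 0 < 1 - s := by linarith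
    have hquarter : s * (1 - s) ≤ 1 / 4 := by nlinarith [sq_nonneg (2 * s - 1)]
    have : p / s - (1 - p) / (1 - s) + 4 * (s - p) = (s - p) * (4 - 1 / (s * (1 - s))) := by
      field_simp
      ring
    rw [this, ← mul_assoc, ← sq]
    refine mul_nonpos_of_nonneg_of_nonpos (sq_nonneg _) (sub_nonpos.2 ?_)
    rw [le_div_iff₀ (by positivity)]
    linarith
  simpa [ψ] using this

lemma prod_le_sum_div_card_pow {ι : Type*} (s : Finset ι) {g : ι → ℝ} (hg : ∀ i ∈ s, 0 ≤ g i) :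
    ∏ i ∈ s, g i ≤ ((∑ i ∈ s, g i) / s.card) ^ s.card := by
  rcases s.eq_empty_or_nonempty with rfl | hs
  · simp
  have hcard : (0 : ℝ) < s.card := by exact_mod_cast hs.card_pos
  have amgm := geom_mean_le_arith_mean_weighted s (fun _ => 1 / (s.card : ℝ)) g
    (fun _ _ => by positivity) (by simp [hcard.ne']) hg
  rw [finsetProd_rpow s g hg, ← Finset.mul_sum, one_div_mul_eq_div] at amgm
  calc ∏ i ∈ s, g i = ((∏ i ∈ s, g i) ^ (1 / (s.card : ℝ))) ^ s.card := by
        rw [← rpow_natCast, ← rpow_mul (Finset.prod_nonneg hg), one_div_mul_cancel hcard.ne',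
          rpow_one]
    _ ≤ _ := pow_le_pow_left₀ (rpow_nonneg (Finset.prod_nonneg hg) _) amgm _

lemma div_pow_mul_div_pow_le {a b : ℕ} (ha : 0 < a) (hb : 0 < b) {t : ℝ}
    (ht : t ∈ Ioo (0 : ℝ) 1) :
    (t / a) ^ a * ((1 - t) / b) ^ b ≤
      (1 / (a + b)) ^ (a + b) * exp (-(2 * (a + b)) * (t - a / (a + b)) ^ 2) := by
  obtain ⟨ht₀, ht₁⟩ := ht
  have ha' : (0 : ℝ) < a := by exact_mod_cast ha
  have hb' : (0 : ℝ) < b := by exact_mod_cast hb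
  have hk : (0 : ℝ) < a + b := by positivity
  have h1t : 0 < 1 - t := by linarith
  set p : ℝ := a / (a + b) with hp_def
  have hap : (a : ℝ) = (a + b) * p := by rw [hp_def]; field_simp
  have hbp : (b : ℝ) = (a + b) * (1 - p) := by rw [hp_def]; field_simp; ring
  have pinsker := bernoulli_pinsker (p := p) ⟨by positivity, (div_lt_one hk).2 (by linarith)⟩
    ⟨ht₀, ht₁⟩
  have h1p : 1 - p = b / (a + b) := by rw [hp_def]; field_simp; ring
  rw [h1p, log_div ha'.ne' hk.ne', log_div hb'.ne' hk.ne', ← h1p] at pinsker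
  rw [← log_le_log_iff (by positivity) (by positivity), log_mul (by positivity) (by positivity),
    log_mul (by positivity) (by positivity), log_pow, log_pow, log_pow, log_exp,
    log_div ht₀.ne' ha'.ne', log_div h1t.ne' hb'.ne', one_div, log_inv]
  push_cast
  clear_value p
  linear_combination (a + b) * pinsker + (log t - log a) * hap + (log (1 - t) - log b) * hbp

lemma prod_range_le_of_sum_range_eq_one {g : ℕ → ℝ} {a k : ℕ} (ha : 0 < a) (hak : a < k)
    (hg : ∀ i < k, 0 < g i) (hsum : ∑ i ∈ Finset.range k, g i = 1) :
    ∏ i ∈ Finset.range k, g i ≤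
      (1 / k) ^ k * exp (-(2 * k) * (∑ i ∈ Finset.range a, g i - a / k) ^ 2) := by
  obtain ⟨b, rfl⟩ := Nat.exists_eq_add_of_lt hak
  have hg_Ico : ∀ i ∈ Finset.Ico a (a + b + 1), 0 < g i :=
    fun i hi => hg i (Finset.mem_Ico.1 hi).2
  have hg_range : ∀ i ∈ Finset.range a, 0 < g i := fun i hi => hg i (by simp at hi; omega)
  set t := ∑ i ∈ Finset.range a, g i
  have hrest : ∑ i ∈ Finset.Ico a (a + b + 1), g i = 1 - t := by
    rw [← hsum, ← Finset.sum_range_add_sum_Ico g hak.le, add_sub_cancel_left]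
  have ht : t ∈ Ioo (0 : ℝ) 1 :=
    ⟨Finset.sum_pos hg_range (Finset.nonempty_range_iff.2 ha.ne'),
      sub_pos.1 (hrest ▸ Finset.sum_pos hg_Ico (Finset.nonempty_Ico.2 hak))⟩
  have hfirst := prod_le_sum_div_card_pow (Finset.range a) (fun i hi => (hg_range i hi).le)
  have hlast := prod_le_sum_div_card_pow (Finset.Ico a (a + b + 1))
    (fun i hi => (hg_Ico i hi).le)
  rw [Finset.card_range] at hfirst
  rw [hrest, Nat.card_Ico, show a + b + 1 - a = b + 1 by omega] at hlast
  calc ∏ i ∈ Finset.range (a + b + 1), g i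
      = (∏ i ∈ Finset.range a, g i) * ∏ i ∈ Finset.Ico a (a + b + 1), g i :=
        (Finset.prod_range_mul_prod_Ico g hak.le).symm
    _ ≤ (t / a) ^ a * ((1 - t) / ↑(b + 1)) ^ (b + 1) :=
        mul_le_mul hfirst hlast (Finset.prod_nonneg fun i hi => (hg_Ico i hi).le)
          (pow_nonneg (div_nonneg ht.1.le (Nat.cast_nonneg a)) a)
    _ ≤ _ := by
        have := div_pow_mul_div_pow_le ha b.succ_pos ht
        push_cast at this ⊢
        rwa [← add_assoc] at this

end Real

lemma sub_mul_sub_eq_div_mul_one_sub_mul_one_sub {L d : ℝ} {k : ℕ} (hL : L ≠ 0) :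
    (L - d) * (1 / k - 1 / (2 * k ^ 2)) = L / k * (1 - d / L) * (1 - 1 / (2 * k)) := by
  rcases eq_or_ne (k : ℝ) 0 with hk | hk
  · simp [hk]
  field_simp

lemma div_pow_mul_exp_le_exp_neg_one_mul_pow {k : ℕ} {L d e : ℝ} (hk : 1 ≤ k) (hL : 0 < L)
    (hd₀ : 0 ≤ d) (hd : d ≤ L / 2) (he : d / L + 1 / k ≤ e) :
    (L / k) ^ k * Real.exp (-(2 * k * e)) ≤
      Real.exp (-1) * ((L - d) * (1 / k - 1 / (2 * k ^ 2))) ^ k := by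
  have hk₁ : (1 : ℝ) ≤ k := by exact_mod_cast hk
  have hcurv : Real.exp (-(2 * (d / L))) ≤ 1 - d / L :=
    Real.exp_neg_two_mul_le_one_sub (by positivity) (by rw [div_le_iff₀ hL]; linarith)
  have hmesh : Real.exp (-(2 * (1 / (2 * k)))) ≤ 1 - 1 / (2 * k) :=
    Real.exp_neg_two_mul_le_one_sub (by positivity)
      (by rw [div_le_div_iff₀ (by positivity) two_pos]; linarith)
  have hsplit : Real.exp (-(2 * k * (d / L + 1 / k))) =
      Real.exp (-1) * (Real.exp (-(2 * (d / L))) * Real.exp (-(2 * (1 / (2 * k))))) ^ k := by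
    rw [mul_pow, ← Real.exp_nat_mul, ← Real.exp_nat_mul, ← Real.exp_add, ← Real.exp_add]
    congr 1
    field_simp
    ring
  calc (L / k) ^ k * Real.exp (-(2 * k * e))
      ≤ (L / k) ^ k * Real.exp (-(2 * k * (d / L + 1 / k))) := by gcongr
    _ = Real.exp (-1) *
          (L / k * Real.exp (-(2 * (d / L))) * Real.exp (-(2 * (1 / (2 * k))))) ^ k := by
      rw [hsplit]
      ring
    _ ≤ Real.exp (-1) * ((L - d) * (1 / k - 1 / (2 * k ^ 2))) ^ k := by
      rw [sub_mul_sub_eq_div_mul_one_sub_mul_one_sub hL.ne']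
      gcongr
      exact mul_nonneg (by positivity) ((Real.exp_pos _).le.trans hcurv)

lemma two_mul_sq_pow_le_exp {k n : ℕ} (hk : 6 ≤ k) (hn : (k : ℝ) ^ 2 * Real.log k ≤ n) :
    ((2 : ℝ) * k ^ 2) ^ (k - 1) ≤ Real.exp (n / 2) := by
  have hk₆ : (6 : ℝ) ≤ k := by exact_mod_cast hk
  have hlog : 0 < Real.log k := Real.log_pos (by linarith)
  calc ((2 : ℝ) * k ^ 2) ^ (k - 1) ≤ ((k : ℝ) ^ 3) ^ (k - 1) := by gcongr; nlinarith
    _ ≤ ((k : ℝ) ^ 3) ^ k := pow_le_pow_right₀ (one_le_pow₀ (by linarith)) (Nat.sub_le k 1)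
    _ = Real.exp (3 * k * Real.log k) := by
        rw [← pow_mul, ← Real.rpow_natCast, Real.rpow_def_of_pos (by positivity)]
        push_cast
        ring_nf
    _ ≤ Real.exp (n / 2) := Real.exp_le_exp.2 (by nlinarith)

lemma pow_mul_exp_le_exp_mul_pow {k n : ℕ} {L d e : ℝ} (hk : 6 ≤ k) (hL : 0 < L) (hd₀ : 0 ≤ d)
    (hd : d ≤ L / 2) (he : d / L + 1 / k ≤ e) (hn : (k : ℝ) ^ 2 * Real.log k ≤ n) :
    ((L / k) ^ k * Real.exp (-(2 * k * e))) ^ n ≤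
      Real.exp (-(n / 2)) *
        (((L - d) * (1 / k - 1 / (2 * k ^ 2))) ^ (k * n) * (1 / (2 * k ^ 2)) ^ (k - 1)) := by
  have hm : 0 ≤ (L - d) * (1 / k - 1 / (2 * k ^ 2)) := by
    have hk₆ : (6 : ℝ) ≤ k := by exact_mod_cast hk
    rw [sub_mul_sub_eq_div_mul_one_sub_mul_one_sub hL.ne']
    refine mul_nonneg (mul_nonneg (by positivity) ?_) ?_
    · rw [sub_nonneg, div_le_one hL]; linarith
    · rw [sub_nonneg, div_le_one (by positivity)]; linarith
  have hvol : Real.exp (-(n : ℝ)) ≤ Real.exp (-(n / 2)) * (1 / (2 * k ^ 2)) ^ (k - 1) := by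
    rw [one_div_pow, show -(n : ℝ) = -(n / 2) + -(n / 2) by ring, Real.exp_add, Real.exp_neg,
      one_div]
    gcongr
    exact two_mul_sq_pow_le_exp hk hn
  calc ((L / k) ^ k * Real.exp (-(2 * k * e))) ^ n
      ≤ (Real.exp (-1) * ((L - d) * (1 / k - 1 / (2 * k ^ 2))) ^ k) ^ n :=
        pow_le_pow_left₀ (by positivity)
          (div_pow_mul_exp_le_exp_neg_one_mul_pow (by omega) hL hd₀ hd he) n
    _ = Real.exp (-(n : ℝ)) * ((L - d) * (1 / k - 1 / (2 * k ^ 2))) ^ (k * n) := by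
      rw [mul_pow, ← Real.exp_nat_mul, ← pow_mul]
      ring_nf
    _ ≤ Real.exp (-(n / 2)) * (1 / (2 * k ^ 2)) ^ (k - 1) *
          ((L - d) * (1 / k - 1 / (2 * k ^ 2))) ^ (k * n) := by gcongr
    _ = _ := by ring

lemma sub_mul_setIntegral_le_setIntegral_inter {α : Type*} [MeasurableSpace α] {μ : Measure α}
    {f : α → ℝ} {s t : Set α} {η : ℝ} (ht : MeasurableSet t) (hf : IntegrableOn f s μ)
    (h : ∫ x in s \ t, f x ∂μ ≤ η * ∫ x in s, f x ∂μ) :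
    (1 - η) * ∫ x in s, f x ∂μ ≤ ∫ x in s ∩ t, f x ∂μ := by
  linarith [integral_inter_add_sdiff ht hf]

section DerivBounds

variable {f f' : ℝ → ℝ} {a b : ℝ}

lemma abs_sub_le_integral_abs_deriv (hab : a ≤ b) (hf : ∀ t ∈ Icc a b, HasDerivAt f (f' t) t)
    (hf' : IntervalIntegrable f' volume a b) : |f b - f a| ≤ ∫ t in a..b, |f' t| := by
  rw [← intervalIntegral.integral_eq_sub_of_hasDerivAt (by rwa [uIcc_of_le hab]) hf']
  exact intervalIntegral.abs_integral_le_integral_abs hab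

lemma abs_deriv_mul_sub_le_abs_sub (hab : a ≤ b) (hf : ∀ t ∈ Icc a b, HasDerivAt f (f' t) t)
    (hf' : IntervalIntegrable f' volume a b) (c : ℝ) :
    |f' c| * (b - a) - ∫ t in a..b, |f' t - f' c| ≤ |f b - f a| := by
  have hlin : ∀ t ∈ Icc a b, HasDerivAt (fun s => f s - f' c * s) (f' t - f' c) t :=
    fun t ht => ((hf t ht).sub ((hasDerivAt_id' t).const_mul (f' c))).congr_deriv (by ring)
  have hint := abs_sub_le_integral_abs_deriv hab hlin (hf'.sub intervalIntegrable_const)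
  have htri : |f' c * (b - a)| - |f b - f a| ≤ |f b - f' c * b - (f a - f' c * a)| := by
    rw [show f b - f' c * b - (f a - f' c * a) = -(f' c * (b - a) - (f b - f a)) by ring,
      abs_neg]
    exact abs_sub_abs_le_abs_sub _ _
  rw [abs_mul, abs_of_nonneg (sub_nonneg.2 hab)] at htri
  linarith

end DerivBounds

section PartitionPoints

variable {k : ℕ} {u : Fin (k - 1) → ℝ}

@[simp] lemma pt_zero : pt k u 0 = 0 := rfl

lemma pt_self (hk : k ≠ 0) : pt k u k = 1 := by
  rw [pt, dif_neg hk, dif_neg (by omega)]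

@[simp] lemma pt_succ (j : Fin (k - 1)) : pt k u (j + 1) = u j := by
  rw [pt, dif_neg j.val.succ_ne_zero, dif_pos (by omega)]
  rfl

lemma continuous_pt (k i : ℕ) : Continuous fun u : Fin (k - 1) → ℝ => pt k u i := by
  unfold pt
  split_ifs
  exacts [continuous_const, continuous_apply _, continuous_const]

lemma pt_mem_Icc_of_mem_Icc (hu : u ∈ Icc 0 1) (i : ℕ) : pt k u i ∈ Icc 0 1 := by
  unfold pt
  split_ifs
  exacts [left_mem_Icc.2 zero_le_one, ⟨hu.1 _, hu.2 _⟩, right_mem_Icc.2 zero_le_one]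

lemma sum_range_pt_sub (m : ℕ) :
    ∑ i ∈ Finset.range m, (pt k u (i + 1) - pt k u i) = pt k u m := by
  rw [Finset.sum_range_sub (pt k u), pt_zero, sub_zero]

end PartitionPoints

/-- The paper's `Δ_{k-1}`. -/
def openSimplex (k : ℕ) : Set (Fin (k - 1) → ℝ) := {u | ∀ i < k, pt k u i < pt k u (i + 1)}

noncomputable def uniformNodes (k : ℕ) : Fin (k - 1) → ℝ := fun j => ((j : ℝ) + 1) / k

section Simplex

variable {k : ℕ} {u : Fin (k - 1) → ℝ} {r : ℝ}

lemma pt_mem_Icc_of_mem_openSimplex (hu : u ∈ openSimplex k) {i : ℕ} (hi : i ≤ k) :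
    pt k u i ∈ Icc 0 1 := by
  rcases Nat.eq_zero_or_pos k with rfl | hk
  · simp [Nat.le_zero.1 hi]
  have hmono := (strictMonoOn_Iic_of_lt_succ (ψ := pt k u) (n := k) hu).monotoneOn
  refine ⟨?_, ?_⟩
  · simpa using hmono (Nat.zero_le k) hi (Nat.zero_le i)
  · simpa [pt_self hk.ne'] using hmono hi (mem_Iic.2 le_rfl) hi

lemma openSimplex_subset_Icc (k : ℕ) : openSimplex k ⊆ Icc 0 1 := fun u hu =>
  ⟨fun j => by simpa using (pt_mem_Icc_of_mem_openSimplex hu (i := j + 1) (by omega)).1,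
    fun j => by simpa using (pt_mem_Icc_of_mem_openSimplex hu (i := j + 1) (by omega)).2⟩

lemma abs_pt_sub_lt_of_mem_ball (hr : 0 < r) (hu : u ∈ Metric.ball (uniformNodes k) r)
    {i : ℕ} (hi : i ≤ k) : |pt k u i - i / k| < r := by
  rcases Nat.eq_zero_or_pos i with rfl | hi₀
  · simpa using hr
  rcases hi.lt_or_eq with hik | rfl
  · obtain ⟨j, rfl⟩ := Nat.exists_eq_add_of_lt hi₀
    have := (dist_pi_lt_iff hr).1 hu ⟨j, by omega⟩
    rw [Real.dist_eq] at this
    rw [zero_add, pt_succ ⟨j, by omega⟩]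
    simpa [uniformNodes] using this
  · rw [pt_self hi₀.ne', div_self (by positivity)]
    simpa using hr

lemma abs_pt_succ_sub_pt_sub_lt_of_mem_ball (hr : 0 < r)
    (hu : u ∈ Metric.ball (uniformNodes k) r) {i : ℕ} (hi : i < k) :
    |pt k u (i + 1) - pt k u i - 1 / k| < 2 * r := by
  have h₁ := abs_pt_sub_lt_of_mem_ball hr hu hi.le
  have h₂ := abs_pt_sub_lt_of_mem_ball hr hu hi
  rw [abs_lt] at h₁ h₂ ⊢
  push_cast at h₂
  have : ((i : ℝ) + 1) / k = i / k + 1 / k := add_div _ _ _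
  constructor <;> linarith

lemma ball_uniformNodes_subset_openSimplex (hr : 0 < r) (h2r : 2 * r ≤ 1 / k) :
    Metric.ball (uniformNodes k) r ⊆ openSimplex k := fun u hu i hi => by
  have := abs_lt.1 (abs_pt_succ_sub_pt_sub_lt_of_mem_ball hr hu hi)
  linarith

end Simplex

def l1Chord (x y : ℝ → ℝ) (s t : ℝ) : ℝ := |x t - x s| + |y t - y s|

lemma l1Chord_nonneg (x y : ℝ → ℝ) (s t : ℝ) : 0 ≤ l1Chord x y s t := by
  unfold l1Chord
  positivity

def chordProd (x y : ℝ → ℝ) (k n : ℕ) (u : Fin (k - 1) → ℝ) : ℝ :=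
  ∏ j ∈ Finset.range k, l1Chord x y (pt k u j) (pt k u (j + 1)) ^ n

lemma chordProd_nonneg (x y : ℝ → ℝ) (k n : ℕ) (u : Fin (k - 1) → ℝ) :
    0 ≤ chordProd x y k n u :=
  Finset.prod_nonneg fun _ _ => pow_nonneg (l1Chord_nonneg ..) n

structure HasConstL1Speed (x y x' y' : ℝ → ℝ) (L : ℝ) : Prop where
  hasDerivAt_fst : ∀ t ∈ Icc (0 : ℝ) 1, HasDerivAt x (x' t) t
  hasDerivAt_snd : ∀ t ∈ Icc (0 : ℝ) 1, HasDerivAt y (y' t) t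
  continuousOn_fst : ContinuousOn x' (Icc 0 1)
  continuousOn_snd : ContinuousOn y' (Icc 0 1)
  speed : ∀ t ∈ Icc (0 : ℝ) 1, |x' t| + |y' t| = L

namespace HasConstL1Speed

variable {x y x' y' : ℝ → ℝ} {L a b d : ℝ} {k n : ℕ} {u : Fin (k - 1) → ℝ}

lemma nonneg (hγ : HasConstL1Speed x y x' y' L) : 0 ≤ L :=
  hγ.speed 0 (left_mem_Icc.2 zero_le_one) ▸ by positivity

lemma l1Chord_le (hγ : HasConstL1Speed x y x' y' L) (ha : 0 ≤ a) (hab : a ≤ b) (hb : b ≤ 1) :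
    l1Chord x y a b ≤ L * (b - a) := by
  have hsub := Icc_subset_Icc ha hb
  have hix : IntervalIntegrable x' volume a b :=
    (hγ.continuousOn_fst.mono (uIcc_of_le hab ▸ hsub)).intervalIntegrable
  have hiy : IntervalIntegrable y' volume a b :=
    (hγ.continuousOn_snd.mono (uIcc_of_le hab ▸ hsub)).intervalIntegrable
  have hx := abs_sub_le_integral_abs_deriv hab (fun t ht => hγ.hasDerivAt_fst t (hsub ht)) hix
  have hy := abs_sub_le_integral_abs_deriv hab (fun t ht => hγ.hasDerivAt_snd t (hsub ht)) hiy
  have hspeed : ∫ t in a..b, (|x' t| + |y' t|) = ∫ _ in a..b, L :=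
    intervalIntegral.integral_congr fun t ht => hγ.speed t (hsub (uIcc_of_le hab ▸ ht))
  rw [intervalIntegral.integral_add hix.abs hiy.abs, intervalIntegral.integral_const,
    smul_eq_mul] at hspeed
  rw [l1Chord]
  linarith

/-- Compare the curve with its tangent line at the midpoint of `[a, b]`. -/
lemma sub_mul_le_l1Chord (hγ : HasConstL1Speed x y x' y' L) {r : ℝ}
    (hmod : ∀ s ∈ Icc (0 : ℝ) 1, ∀ t ∈ Icc (0 : ℝ) 1, |s - t| < r →
      |x' s - x' t| + |y' s - y' t| ≤ d)
    (ha : 0 ≤ a) (hab : a ≤ b) (hb : b ≤ 1) (hlen : b - a < 2 * r) :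
    (L - d) * (b - a) ≤ l1Chord x y a b := by
  have hsub := Icc_subset_Icc ha hb
  have hix : IntervalIntegrable x' volume a b :=
    (hγ.continuousOn_fst.mono (uIcc_of_le hab ▸ hsub)).intervalIntegrable
  have hiy : IntervalIntegrable y' volume a b :=
    (hγ.continuousOn_snd.mono (uIcc_of_le hab ▸ hsub)).intervalIntegrable
  set c := (a + b) / 2 with hc_def
  have hc : c ∈ Icc a b := ⟨by linarith, by linarith⟩
  have hx := abs_deriv_mul_sub_le_abs_sub hab (fun t ht => hγ.hasDerivAt_fst t (hsub ht)) hix c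
  have hy := abs_deriv_mul_sub_le_abs_sub hab (fun t ht => hγ.hasDerivAt_snd t (hsub ht)) hiy c
  have hdev : ∫ t in a..b, (|x' t - x' c| + |y' t - y' c|) ≤ ∫ _ in a..b, d := by
    refine intervalIntegral.integral_mono_on hab
      (((hix.sub intervalIntegrable_const).abs).add (hiy.sub intervalIntegrable_const).abs)
      intervalIntegrable_const fun t ht => hmod t (hsub ht) c (hsub hc) ?_
    rw [abs_lt]
    constructor <;> linarith [ht.1, ht.2]
  rw [intervalIntegral.integral_add (hix.sub intervalIntegrable_const).abs
    (hiy.sub intervalIntegrable_const).abs, intervalIntegral.integral_const, smul_eq_mul] at hdev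
  rw [l1Chord, ← hγ.speed c (hsub hc)]
  nlinarith

lemma integrableOn_chordProd (hγ : HasConstL1Speed x y x' y' L) (k n : ℕ) :
    IntegrableOn (chordProd x y k n) (openSimplex k) := by
  have hx : ContinuousOn x (Icc 0 1) :=
    fun t ht => (hγ.hasDerivAt_fst t ht).continuousAt.continuousWithinAt
  have hy : ContinuousOn y (Icc 0 1) :=
    fun t ht => (hγ.hasDerivAt_snd t ht).continuousAt.continuousWithinAt
  have hpt : ∀ i, MapsTo (fun u : Fin (k - 1) → ℝ => pt k u i) (Icc 0 1) (Icc 0 1) :=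
    fun i u hu => pt_mem_Icc_of_mem_Icc hu i
  have hcont : ContinuousOn (chordProd x y k n) (Icc 0 1) :=
    continuousOn_finsetProd _ fun j _ =>
      ((((hx.comp (continuous_pt k (j + 1)).continuousOn (hpt _)).sub
        (hx.comp (continuous_pt k j).continuousOn (hpt _))).abs.add
      ((hy.comp (continuous_pt k (j + 1)).continuousOn (hpt _)).sub
        (hy.comp (continuous_pt k j).continuousOn (hpt _))).abs).pow n)
  exact (hcont.integrableOn_compact isCompact_Icc).mono_set (openSimplex_subset_Icc k)

lemma chordProd_le_pow_prod (hγ : HasConstL1Speed x y x' y' L) (hu : u ∈ openSimplex k) :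
    chordProd x y k n u ≤ (L ^ k * ∏ i ∈ Finset.range k, (pt k u (i + 1) - pt k u i)) ^ n := by
  have hsplit : (L ^ k * ∏ i ∈ Finset.range k, (pt k u (i + 1) - pt k u i)) ^ n =
      ∏ i ∈ Finset.range k, (L * (pt k u (i + 1) - pt k u i)) ^ n := by
    rw [Finset.prod_pow, Finset.prod_mul_distrib, Finset.prod_const, Finset.card_range]
  rw [hsplit]
  refine Finset.prod_le_prod (fun i _ => pow_nonneg (l1Chord_nonneg ..) n) fun i hi => ?_
  have hi := Finset.mem_range.1 hi
  exact pow_le_pow_left₀ (l1Chord_nonneg ..)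
    (hγ.l1Chord_le (pt_mem_Icc_of_mem_openSimplex hu hi.le).1 (hu i hi).le
      (pt_mem_Icc_of_mem_openSimplex hu hi).2) n

lemma chordProd_le_of_notMem_ball (hγ : HasConstL1Speed x y x' y' L) {ε : ℝ} (hε : 0 < ε)
    (hu : u ∈ openSimplex k) (hfar : u ∉ Metric.ball (uniformNodes k) ε) :
    chordProd x y k n u ≤ ((L / k) ^ k * Real.exp (-(2 * k * ε ^ 2))) ^ n := by
  obtain ⟨j, hj⟩ : ∃ j, ε ≤ |u j - uniformNodes k j| := by
    simpa [dist_pi_lt_iff hε, Real.dist_eq] using hfar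
  have hL := hγ.nonneg
  have hjk : (j : ℕ) + 1 < k := by omega
  have hgaps := Real.prod_range_le_of_sum_range_eq_one
    (g := fun i => pt k u (i + 1) - pt k u i) j.val.succ_pos hjk
    (fun i hi => sub_pos.2 (hu i hi)) (by rw [sum_range_pt_sub, pt_self (by omega)])
  rw [sum_range_pt_sub, pt_succ] at hgaps
  have hdev : ε ^ 2 ≤ (u j - ((j + 1 : ℕ) : ℝ) / k) ^ 2 := by
    rw [← sq_abs (u j - _)]
    gcongr
    simpa [uniformNodes] using hj
  calc chordProd x y k n u
      ≤ (L ^ k * ∏ i ∈ Finset.range k, (pt k u (i + 1) - pt k u i)) ^ n :=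
        hγ.chordProd_le_pow_prod hu
    _ ≤ (L ^ k * ((1 / k) ^ k * Real.exp (-(2 * k * ε ^ 2)))) ^ n := by
        gcongr
        · exact mul_nonneg (pow_nonneg hL k)
            (Finset.prod_nonneg fun i hi => (sub_pos.2 (hu i (Finset.mem_range.1 hi))).le)
        · refine hgaps.trans ?_
          gcongr
          nlinarith
    _ = _ := by ring

lemma pow_le_chordProd_of_mem_ball (hγ : HasConstL1Speed x y x' y' L) {r : ℝ}
    (hmod : ∀ s ∈ Icc (0 : ℝ) 1, ∀ t ∈ Icc (0 : ℝ) 1, |s - t| < 1 / k →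
      |x' s - x' t| + |y' s - y' t| ≤ d)
    (hd : d ≤ L) (hr : 0 < r) (h2r : 2 * r ≤ 1 / k) (hu : u ∈ Metric.ball (uniformNodes k) r) :
    ((L - d) * (1 / k - 2 * r)) ^ (k * n) ≤ chordProd x y k n u := by
  have hS := ball_uniformNodes_subset_openSimplex hr h2r hu
  have hconst : ((L - d) * (1 / k - 2 * r)) ^ (k * n) =
      ∏ _i ∈ Finset.range k, ((L - d) * (1 / k - 2 * r)) ^ n := by
    rw [Finset.prod_const, Finset.card_range, ← pow_mul, mul_comm n k]
  rw [hconst]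
  refine Finset.prod_le_prod (fun _ _ => pow_nonneg (by nlinarith) n) fun i hi => ?_
  have hi := Finset.mem_range.1 hi
  have hgap := abs_lt.1 (abs_pt_succ_sub_pt_sub_lt_of_mem_ball hr hu hi)
  refine pow_le_pow_left₀ (by nlinarith) ?_ n
  calc (L - d) * (1 / k - 2 * r) ≤ (L - d) * (pt k u (i + 1) - pt k u i) :=
        mul_le_mul_of_nonneg_left (by linarith) (sub_nonneg.2 hd)
    _ ≤ _ := hγ.sub_mul_le_l1Chord hmod (pt_mem_Icc_of_mem_openSimplex hS hi.le).1
        (hS i hi).le (pt_mem_Icc_of_mem_openSimplex hS hi).2 (by linarith)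

lemma le_setIntegral_chordProd (hγ : HasConstL1Speed x y x' y' L) {r : ℝ}
    (hmod : ∀ s ∈ Icc (0 : ℝ) 1, ∀ t ∈ Icc (0 : ℝ) 1, |s - t| < 1 / k →
      |x' s - x' t| + |y' s - y' t| ≤ d)
    (hd : d ≤ L) (hr : 0 < r) (h2r : 2 * r ≤ 1 / k) :
    ((L - d) * (1 / k - 2 * r)) ^ (k * n) * (2 * r) ^ (k - 1) ≤
      ∫ u in openSimplex k, chordProd x y k n u := by
  have hball : volume.real (Metric.ball (uniformNodes k) r) = (2 * r) ^ (k - 1) := by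
    rw [Measure.real, Real.volume_pi_ball _ hr, Fintype.card_fin,
      ENNReal.toReal_ofReal (by positivity)]
  have hsub := ball_uniformNodes_subset_openSimplex hr h2r
  calc ((L - d) * (1 / k - 2 * r)) ^ (k * n) * (2 * r) ^ (k - 1)
      ≤ ∫ u in Metric.ball (uniformNodes k) r, chordProd x y k n u := by
        rw [← hball]
        exact setIntegral_ge_of_const_le_real Metric.isOpen_ball.measurableSet
          (by simp [Real.volume_pi_ball _ hr])
          (fun u hu => hγ.pow_le_chordProd_of_mem_ball hmod hd hr h2r hu)
          ((hγ.integrableOn_chordProd k n).mono_set hsub)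
    _ ≤ ∫ u in openSimplex k, chordProd x y k n u :=
        setIntegral_mono_set (hγ.integrableOn_chordProd k n)
          (Filter.Eventually.of_forall (chordProd_nonneg x y k n)) hsub.eventuallyLE

lemma setIntegral_chordProd_diff_ball_le (hγ : HasConstL1Speed x y x' y' L) {ε : ℝ}
    (hε : 0 < ε) :
    ∫ u in openSimplex k \ Metric.ball (uniformNodes k) ε, chordProd x y k n u ≤
      ((L / k) ^ k * Real.exp (-(2 * k * ε ^ 2))) ^ n := by
  have hvol : volume (openSimplex k \ Metric.ball (uniformNodes k) ε) ≤ 1 :=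
    calc volume (openSimplex k \ Metric.ball (uniformNodes k) ε)
        ≤ volume (Icc (0 : Fin (k - 1) → ℝ) 1) :=
          measure_mono (sdiff_subset.trans (openSimplex_subset_Icc k))
      _ = 1 := by simp [Real.volume_Icc_pi]
  have hL := hγ.nonneg
  have hbound := norm_setIntegral_le_of_norm_le_const (hvol.trans_lt ENNReal.one_lt_top)
    fun u hu => by
      rw [Real.norm_of_nonneg (chordProd_nonneg x y k n u)]
      exact hγ.chordProd_le_of_notMem_ball hε hu.1 hu.2
  calc _ ≤ _ := le_abs_self _
    _ ≤ _ := hbound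
    _ ≤ ((L / k) ^ k * Real.exp (-(2 * k * ε ^ 2))) ^ n * 1 := by
        gcongr
        exact ENNReal.toReal_le_of_le_ofReal zero_le_one (by simpa using hvol)
    _ = _ := mul_one _

lemma setIntegral_chordProd_diff_ball_le_exp_mul (hγ : HasConstL1Speed x y x' y' L)
    (hL : 0 < L) {ε : ℝ}
    (hmod : ∀ s ∈ Icc (0 : ℝ) 1, ∀ t ∈ Icc (0 : ℝ) 1, |s - t| < 1 / k →
      |x' s - x' t| + |y' s - y' t| ≤ d)
    (hk : 6 ≤ k) (hd₀ : 0 ≤ d) (hd : d ≤ L / 2) (hε₀ : 0 < ε) (hε : d / L + 1 / k ≤ ε ^ 2)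
    (hn : (k : ℝ) ^ 2 * Real.log k ≤ n) :
    ∫ u in openSimplex k \ Metric.ball (uniformNodes k) ε, chordProd x y k n u ≤
      Real.exp (-(n / 2)) * ∫ u in openSimplex k, chordProd x y k n u := by
  have hk₆ : (6 : ℝ) ≤ k := by exact_mod_cast hk
  have hr : 2 * (1 / (4 * (k : ℝ) ^ 2)) = 1 / (2 * k ^ 2) := by field_simp; ring
  have h2r : 2 * (1 / (4 * (k : ℝ) ^ 2)) ≤ 1 / k := by
    rw [hr, div_le_div_iff₀ (by positivity) (by positivity)]
    nlinarith
  have hbox := hγ.le_setIntegral_chordProd (n := n) hmod (by linarith) (by positivity) h2r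
  rw [hr] at hbox
  calc ∫ u in openSimplex k \ Metric.ball (uniformNodes k) ε, chordProd x y k n u
      ≤ ((L / k) ^ k * Real.exp (-(2 * k * ε ^ 2))) ^ n :=
        hγ.setIntegral_chordProd_diff_ball_le hε₀
    _ ≤ _ := pow_mul_exp_le_exp_mul_pow hk hL hd₀ hd hε hn
    _ ≤ _ := by gcongr

end HasConstL1Speed

theorem stmt15 (x y x' y' : ℝ → ℝ) (L : ℝ) (hL : 0 < L)
    (hx : ∀ t ∈ Icc (0:ℝ) 1, HasDerivAt x (x' t) t)
    (hy : ∀ t ∈ Icc (0:ℝ) 1, HasDerivAt y (y' t) t)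
    (hcx : ContinuousOn x' (Icc 0 1)) (hcy : ContinuousOn y' (Icc 0 1))
    (hspeed : ∀ t ∈ Icc (0:ℝ) 1, |x' t| + |y' t| = L)
    (δ : ℕ → ℝ)
    (hmod : ∀ k : ℕ, 0 < k → ∀ s ∈ Icc (0:ℝ) 1, ∀ t ∈ Icc (0:ℝ) 1,
      |s - t| < 1 / k → |x' s - x' t| + |y' s - y' t| ≤ δ k)
    (hδ0 : Filter.Tendsto δ Filter.atTop (nhds 0)) :
    ∃ c : ℝ, 0 < c ∧ ∃ K : ℕ, ∀ k : ℕ, K ≤ k → ∀ n : ℕ, n = ⌈(k:ℝ)^2 * Real.log k⌉₊ →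
      (1 - Real.exp (-(c * n))) *
        (∫ u in {u : Fin (k-1) → ℝ | ∀ i < k, pt k u i < pt k u (i+1)},
          ∏ j ∈ Finset.range k,
            (|x (pt k u (j+1)) - x (pt k u j)| + |y (pt k u (j+1)) - y (pt k u j)|) ^ n)
      ≤ ∫ u in {u : Fin (k-1) → ℝ | (∀ i < k, pt k u i < pt k u (i+1)) ∧
            ∀ j : Fin (k-1), |u j - ((j:ℝ) + 1)/k| < Real.sqrt (δ k / L) + Real.sqrt (1/k)},
          ∏ j ∈ Finset.range k,
            (|x (pt k u (j+1)) - x (pt k u j)| + |y (pt k u (j+1)) - y (pt k u j)|) ^ n := by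
  have hγ : HasConstL1Speed x y x' y' L := ⟨hx, hy, hcx, hcy, hspeed⟩
  obtain ⟨K, hK⟩ := Filter.eventually_atTop.1 (hδ0.eventually_lt_const (half_pos hL))
  refine ⟨1 / 2, one_half_pos, max K 6, fun k hk n hn => ?_⟩
  have hk₆ : 6 ≤ k := le_of_max_le_right hk
  have hk₀ : (0 : ℝ) < k := by exact_mod_cast (show 0 < k by omega)
  have hδ₀ : 0 ≤ δ k := by
    simpa using hmod k (by omega) 0 (left_mem_Icc.2 zero_le_one) 0 (left_mem_Icc.2 zero_le_one)
      (by simpa using hk₀)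
  set ε := Real.sqrt (δ k / L) + Real.sqrt (1 / k)
  have hε₀ : 0 < ε := add_pos_of_nonneg_of_pos (Real.sqrt_nonneg _) (by positivity)
  have hε : δ k / L + 1 / k ≤ ε ^ 2 := by
    rw [add_sq, Real.sq_sqrt (by positivity), Real.sq_sqrt (by positivity)]
    nlinarith [Real.sqrt_nonneg (δ k / L), Real.sqrt_nonneg (1 / (k : ℝ))]
  have hset : {u : Fin (k - 1) → ℝ | (∀ i < k, pt k u i < pt k u (i + 1)) ∧
      ∀ j : Fin (k - 1), |u j - ((j : ℝ) + 1) / k| < ε} =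
      openSimplex k ∩ Metric.ball (uniformNodes k) ε := by
    ext u
    simp [openSimplex, dist_pi_lt_iff hε₀, Real.dist_eq, uniformNodes]
  rw [hset, show (1 / 2 : ℝ) * n = n / 2 by ring]
  exact sub_mul_setIntegral_le_setIntegral_inter Metric.isOpen_ball.measurableSet
    (hγ.integrableOn_chordProd k n)
    (hγ.setIntegral_chordProd_diff_ball_le_exp_mul hL (hmod k (by omega)) hk₆ hδ₀
      (hK k (le_of_max_le_left hk)).le hε₀ hε (hn ▸ Nat.le_ceil _))
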